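/- Let p be a prime, ℤ_p the ring of p-adic integers, and Λ = ℤ_p[[X]] the ring of formal power series in one variable over ℤ_p. Let M be a finitely generated Λ-module. Then M is finite (as a set) if and only if the annihilator ideal of M in Λ has height at least 2, i.e. if and only if M is pseudo-null over Λ. -/

import Mathlib

/-!
`ℤ_p⟦X⟧` is a two-dimensional Noetherian local ring with finite residue field; the upper bound
on the dimension is Krull's height theorem for `X`, which lies in the Jacobson radical, with
`ℤ_p⟦X⟧ ⧸ (X) ≅ ℤ_p`. In such a ring the only prime of height at least `2` is the maximal ideal
`𝔪`, so `Ann M` has height at least `2` iff `𝔪 ≤ √(Ann M)`, i.e. iff `Ann M` contains a power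
of `𝔪`, i.e. iff `R ⧸ Ann M` is finite. Finally `M` is finite iff `R ⧸ Ann M` is: `R ⧸ Ann M`
embeds into `End M`, and `M` is a finitely generated `R ⧸ Ann M`-module.
-/

/-- An ideal `I` of a commutative ring has height at least `2`: below every prime ideal
containing `I` there is a strictly decreasing chain of two further prime ideals. -/
def Ideal.HeightGETwo {A : Type*} [CommRing A] (I : Ideal A) : Prop :=
  ∀ P : Ideal A, P.IsPrime → I ≤ P →
    ∃ Q₀ Q₁ : Ideal A, Q₀.IsPrime ∧ Q₁.IsPrime ∧ Q₀ < Q₁ ∧ Q₁ < P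

open IsLocalRing

namespace PowerSeries

variable {R : Type*} [CommRing R]

theorem ker_constantCoeff : RingHom.ker (constantCoeff (R := R)) = Ideal.span {X} := by
  ext f
  rw [RingHom.mem_ker, Ideal.mem_span_singleton, X_dvd_iff]

theorem X_mem_jacobson : X ∈ Ring.jacobson R⟦X⟧ := by
  rw [← Ideal.jacobson_bot, Ideal.mem_jacobson_bot]
  intro f
  simp [isUnit_iff_constantCoeff]

theorem ringKrullDim_of_isNoetherianRing [IsNoetherianRing R] :
    ringKrullDim R⟦X⟧ = ringKrullDim R + 1 := by
  refine le_antisymm ?_ ringKrullDim_succ_le_ringKrullDim_powerseries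
  calc ringKrullDim R⟦X⟧
      ≤ ringKrullDim (R⟦X⟧ ⧸ Ideal.span {X}) + Set.encard {(X : R⟦X⟧)} :=
        ringKrullDim_le_ringKrullDim_quotient_add_encard _ (by simpa using X_mem_jacobson)
    _ = ringKrullDim R + 1 := by
        rw [Set.encard_singleton, ← ker_constantCoeff,
          ringKrullDim_eq_of_ringEquiv (RingHom.quotientKerEquivOfSurjective constantCoeff_surj)]
        rfl

instance isLocalHom_constantCoeff : IsLocalHom (constantCoeff : R⟦X⟧ →+* R) :=
  ⟨fun _ hf => isUnit_iff_constantCoeff.mpr hf⟩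

instance [IsLocalRing R] [Finite (ResidueField R)] : Finite (ResidueField R⟦X⟧) :=
  Finite.of_injective _ (ResidueField.map (constantCoeff : R⟦X⟧ →+* R)).injective

end PowerSeries

theorem finite_iff_finite_quotient_annihilator {R M : Type*} [CommRing R]
    [AddCommGroup M] [Module R M] [Module.Finite R M] :
    Finite M ↔ Finite (R ⧸ Module.annihilator R M) := by
  constructor
  · intro
    have : Finite (AddMonoid.End M) := Finite.of_injective _ DFunLike.coe_injective
    exact Finite.of_injective _ (RingHom.kerLift_injective (Module.toAddMonoidEnd R M))
  · intro
    let : Module (R ⧸ Module.annihilator R M) M := Module.quotientAnnihilator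
    have : Module.Finite (R ⧸ Module.annihilator R M) M :=
      .of_restrictScalars_finite R _ M
    exact Module.finite_of_finite (R ⧸ Module.annihilator R M)

namespace Ideal

variable {R : Type*} [CommRing R]

theorem heightGETwo_iff {I : Ideal R} :
    I.HeightGETwo ↔ ∀ P : Ideal R, P.IsPrime → I ≤ P → 2 ≤ P.height := by
  refine forall₃_congr fun P hP _ => ⟨?_, fun h => ?_⟩
  · rintro ⟨Q₀, Q₁, hQ₀, hQ₁, h01, h1P⟩
    calc (2 : ℕ∞) ≤ Q₀.height + 1 + 1 := by simp [add_assoc, one_add_one_eq_two]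
      _ ≤ Q₁.height + 1 := by gcongr; exact height_add_one_le_of_lt_of_isPrime h01
      _ ≤ P.height := height_add_one_le_of_lt_of_isPrime h1P
  · have hP_height : ¬ P.height ≤ (1 : ℕ) := fun h' => by simpa using h.trans h'
    simp only [height_le_iff, not_forall, not_lt] at hP_height
    obtain ⟨Q₁, hQ₁, h1P, hQ₁h⟩ := hP_height
    have hQ₁_height : ¬ Q₁.height ≤ (0 : ℕ) := fun h' => by simpa using hQ₁h.trans h'
    simp only [height_le_iff, not_forall] at hQ₁_height
    obtain ⟨Q₀, hQ₀, h01, -⟩ := hQ₁_height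
    exact ⟨Q₀, Q₁, hQ₀, hQ₁, h01, h1P⟩

end Ideal

namespace IsLocalRing

variable {R : Type*} [CommRing R] [IsLocalRing R]

theorem maximalIdeal_le_radical_iff {I : Ideal R} :
    maximalIdeal R ≤ I.radical ↔ ∀ P : Ideal R, P.IsPrime → I ≤ P → P = maximalIdeal R := by
  rw [Ideal.radical_eq_sInf, le_sInf_iff]
  exact forall_congr' fun P =>
    ⟨fun h hP hIP => le_antisymm (le_maximalIdeal hP.ne_top) (h ⟨hIP, hP⟩),
      fun h ⟨hIP, hP⟩ => (h hP hIP).ge⟩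

theorem finite_quotient_iff_maximalIdeal_le_radical [IsNoetherianRing R]
    [Finite (ResidueField R)] {I : Ideal R} :
    Finite (R ⧸ I) ↔ maximalIdeal R ≤ I.radical := by
  constructor
  · intro
    rw [maximalIdeal_le_radical_iff]
    intro P hP hIP
    have : Finite (R ⧸ P) := Finite.of_surjective _ (Ideal.Quotient.factor_surjective hIP)
    exact eq_maximalIdeal (Ideal.Quotient.maximal_of_isField P (Finite.isField_of_domain _))
  · intro h
    obtain ⟨n, hn⟩ := Ideal.exists_pow_le_of_le_radical_of_fg h (IsNoetherian.noetherian _)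
    have : Finite (R ⧸ maximalIdeal R) := ‹Finite (ResidueField R)›
    have := Ideal.finite_quotient_pow (IsNoetherian.noetherian (maximalIdeal R)) n
    exact Finite.of_surjective _ (Ideal.Quotient.factor_surjective hn)

theorem heightGETwo_iff_maximalIdeal_le_radical [IsNoetherianRing R] (hR : ringKrullDim R = 2)
    {I : Ideal R} : I.HeightGETwo ↔ maximalIdeal R ≤ I.radical := by
  have hm : (maximalIdeal R).height = 2 := by
    have := maximalIdeal_height_eq_ringKrullDim (R := R)
    rw [hR] at this
    exact WithBot.coe_inj.mp this
  rw [Ideal.heightGETwo_iff, maximalIdeal_le_radical_iff]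
  refine forall₃_congr fun P hP _ => ⟨fun h => ?_, fun h => h ▸ hm.ge⟩
  exact Ideal.eq_of_le_of_height_le (I := P) (le_maximalIdeal hP.ne_top) (hm.trans_le h)

end IsLocalRing

/-- Let `Λ = ℤ_p[[X]]` and let `M` be a finitely generated `Λ`-module.
Then `M` is finite as a set if and only if the annihilator ideal of `M` in `Λ` has height
at least `2`, i.e. if and only if `M` is pseudo-null over `Λ`. -/
theorem finite_iff_annihilator_heightGETwo (p : ℕ) [Fact p.Prime]
    (M : Type*) [AddCommGroup M] [Module (PowerSeries (PadicInt p)) M]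
    [Module.Finite (PowerSeries (PadicInt p)) M] :
    Finite M ↔
      Ideal.HeightGETwo (Module.annihilator (PowerSeries (PadicInt p)) M) := by
  have hdim : ringKrullDim (PowerSeries ℤ_[p]) = 2 := by
    rw [PowerSeries.ringKrullDim_of_isNoetherianRing, IsDiscreteValuationRing.ringKrullDim_eq_one]
    rfl
  rw [finite_iff_finite_quotient_annihilator (R := PowerSeries ℤ_[p]),
    IsLocalRing.finite_quotient_iff_maximalIdeal_le_radical,
    IsLocalRing.heightGETwo_iff_maximalIdeal_le_radical hdim]
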